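/- arXiv:1305.3293 — 4 statements merged into one kernel-verified Lean document; each statement's English description precedes it below -/
import Mathlib

section
/- Let a, β, γ > 0 with β > 2γ and βa > 1. If k ∈ (β, ∞) satisfies (k+β)(k+γ)e^{−ka} = (k−β)(k−γ)e^{ka}, then k < (1 + 41e^{−2βa})β and k² < (1 + 123e^{−2βa})β². -/
open Real Set

/-!
Multiplying the characteristic equation by `e^{-ka}` gives
`(k + β)(k + γ) e^{-2ka} = (k - β)(k - γ)`. Since `k - γ > k / 2` and `(k + β)(k + γ) < 4k²`,
this forces `k - β < 8k e^{-2ka}`. If `k ≥ 2β` then `k - β ≥ k / 2` while `e^{-2ka} < e^{-4} < 1/16`,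
which is impossible; so `k < 2β`, and with `e^{-2ka} < e^{-2βa}` we get `k - β < 16β e^{-2βa}`,
hence also `k² - β² = (k + β)(k - β) < 48β² e^{-2βa}`.
-/

section

variable {a β γ k : ℝ}

lemma sub_lt_eight_mul_of_mul_eq {w : ℝ} (hγ : 0 < γ) (hβγ : 2 * γ < β) (hk : β < k)
    (hw : 0 ≤ w) (h : (k + β) * (k + γ) * w = (k - β) * (k - γ)) :
    k - β < 8 * k * w := by
  have hkγ : k / 2 < k - γ := by linarith
  have hbound : (k + β) * (k + γ) * w ≤ 4 * k ^ 2 * w :=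
    mul_le_mul_of_nonneg_right (by nlinarith) hw
  nlinarith

lemma mul_exp_neg_two_mul_eq_of_char_eq
    (heq : (k + β) * (k + γ) * exp (-k * a) = (k - β) * (k - γ) * exp (k * a)) :
    (k + β) * (k + γ) * exp (-2 * k * a) = (k - β) * (k - γ) := by
  calc (k + β) * (k + γ) * exp (-2 * k * a)
      = (k + β) * (k + γ) * exp (-k * a) * exp (-k * a) := by
        rw [mul_assoc _ (exp _), ← exp_add]; ring_nf
    _ = (k - β) * (k - γ) * exp (k * a) * exp (-k * a) := by rw [heq]
    _ = (k - β) * (k - γ) := by rw [mul_assoc _ (exp _), ← exp_add]; simp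

lemma exp_neg_four_lt : exp (-4) < 1 / 16 := by
  have he : 2 < exp 1 := lt_trans (by norm_num) exp_one_gt_d9
  have h4 : 16 < exp 4 := by
    have : exp 4 = exp 1 ^ 4 := by rw [← exp_nat_mul]; norm_num
    rw [this]
    calc (16 : ℝ) = 2 ^ 4 := by norm_num
      _ < exp 1 ^ 4 := pow_lt_pow_left₀ he (by norm_num) (by norm_num)
  rw [exp_neg]
  exact inv_lt_of_inv_lt₀ (by norm_num) (by simpa using h4)

lemma lt_two_mul_of_mul_exp_eq (ha : 0 < a) (hγ : 0 < γ) (hβγ : 2 * γ < β) (hβa : 1 < β * a)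
    (hk : β < k) (h : (k + β) * (k + γ) * exp (-2 * k * a) = (k - β) * (k - γ)) :
    k < 2 * β := by
  by_contra! hk2
  have hsmall : exp (-2 * k * a) < 1 / 16 :=
    lt_trans (exp_lt_exp.2 (by nlinarith)) exp_neg_four_lt
  have := sub_lt_eight_mul_of_mul_eq hγ hβγ hk (exp_pos _).le h
  nlinarith

end

theorem stmt1 (a β γ k : ℝ) (ha : 0 < a) (hγ : 0 < γ) (hβγ : β > 2 * γ)
    (hβa : β * a > 1) (hk : k ∈ Ioi β)
    (heq : (k + β) * (k + γ) * Real.exp (-k * a) = (k - β) * (k - γ) * Real.exp (k * a)) :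
    k < (1 + 41 * Real.exp (-2 * β * a)) * β ∧
    k ^ 2 < (1 + 123 * Real.exp (-2 * β * a)) * β ^ 2 := by
  rw [mem_Ioi] at hk
  have hβ : 0 < β := by linarith
  have hchar := mul_exp_neg_two_mul_eq_of_char_eq heq
  have hk2 := lt_two_mul_of_mul_exp_eq ha hγ hβγ hβa hk hchar
  have hgap : k - β < 16 * β * exp (-2 * β * a) :=
    calc k - β < 8 * k * exp (-2 * k * a) :=
          sub_lt_eight_mul_of_mul_eq hγ hβγ hk (exp_pos _).le hchar
      _ ≤ 8 * (2 * β) * exp (-2 * β * a) := by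
          have hdecay : exp (-2 * k * a) ≤ exp (-2 * β * a) := exp_le_exp.2 (by nlinarith)
          exact mul_le_mul (by linarith) hdecay (exp_pos _).le (by linarith)
      _ = 16 * β * exp (-2 * β * a) := by ring
  constructor
  · nlinarith
  · nlinarith
end

section
/- For a, β, γ > 0 with β > 2γ and βa > 1, the lowest eigenvalue E(a,β,γ) of the self-adjoint operator on L²(0,a) acting as f ↦ −f'' with boundary conditions f'(0)+βf(0)=0 and f'(a)−γf(a)=0 satisfies β² < −E(a,β,γ) < β² + 123β²e^{−2βa}. -/
/-!
For `k > 0`, the solutions of `f'' = k² f` are the combinations of `exp (k x)` and `exp (-k x)`,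
and imposing both Robin conditions shows that `-k²` is an eigenvalue exactly when
`F(k) = (k - β)(k - γ) e^{2ka} - (k + β)(k + γ)` vanishes. Now `F(β) < 0`, while `F(k) > 0` as soon
as `k² ≥ β² + 123 β² e^{-2βa}`: then `e^{2ka} = e^{2βa} e^{2(k-β)a}` with
`e^{2βa} ≥ 123 β² / (k² - β²)` and `e^{2(k-β)a} ≥ k² / β²` (because `βa > 1`), after which
`β > 2γ` leaves only a crude cubic inequality. The intermediate value theorem gives an eigenvalue
`-k²` with `β < k`, so `E < -β²`; and `E = -k²` itself cannot have `k² ≥ β² + 123 β² e^{-2βa}`.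
-/

open Real Set

theorem eq_mul_exp_of_hasDerivAt {y : ℝ → ℝ} {a c : ℝ}
    (hy : ∀ x ∈ Icc 0 a, HasDerivAt y (c * y x) x) :
    ∀ x ∈ Icc 0 a, y x = y 0 * exp (c * x) := by
  have hconst := constant_of_has_deriv_right_zero (f := fun x => y x * exp (-(c * x)))
    (fun x hx => ((hy x hx).continuousAt.mul (by fun_prop)).continuousWithinAt)
    (fun x hx => (((hy x (Ico_subset_Icc_self hx)).mul
      (hasDerivAt_const_mul c).neg.exp).congr_deriv (by ring)).hasDerivWithinAt)
  intro x hx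
  have h := hconst x hx
  simp only [mul_zero, neg_zero, exp_zero, mul_one] at h
  rw [← h, mul_assoc, ← exp_add, neg_add_cancel, exp_zero, mul_one]

theorem hasDerivAt_exp_combination (k l A B x : ℝ) :
    HasDerivAt (fun x => A * exp (k * x) + B * exp (l * x))
      (k * A * exp (k * x) + l * B * exp (l * x)) x := by
  refine (((hasDerivAt_const_mul k).exp.const_mul A).add
    ((hasDerivAt_const_mul l).exp.const_mul B)).congr_deriv ?_
  ring

theorem le_mul_exp_sub_mul {a β k : ℝ} (hβ : 0 < β) (hβk : β ≤ k) (hβa : 1 ≤ β * a) :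
    k ≤ β * exp ((k - β) * a) := by
  calc k ≤ β * (1 + (k - β) * a) := by nlinarith
    _ ≤ β * exp ((k - β) * a) := by gcongr; linarith [add_one_le_exp ((k - β) * a)]

noncomputable def robinSecular (a β γ k : ℝ) : ℝ :=
  (k - β) * (k - γ) * exp (2 * k * a) - (k + β) * (k + γ)

def robinEigenvalues (a β γ : ℝ) : Set ℝ :=
  {E : ℝ | ∃ f : ℝ → ℝ, ContDiff ℝ 2 f ∧ (∃ x ∈ Icc 0 a, f x ≠ 0) ∧
      (∀ x ∈ Icc 0 a, -(deriv (deriv f) x) = E * f x) ∧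
      deriv f 0 + β * f 0 = 0 ∧ deriv f a - γ * f a = 0}

theorem neg_sq_mem_robinEigenvalues {a β γ k : ℝ} (ha : 0 ≤ a) (hk : k ≠ 0)
    (hroot : robinSecular a β γ k = 0) : -k ^ 2 ∈ robinEigenvalues a β γ := by
  set f := fun x => (k - β) * exp (k * x) + (k + β) * exp (-k * x)
  have hf' : deriv f = fun x => k * (k - β) * exp (k * x) + -k * (k + β) * exp (-k * x) :=
    funext fun x => (hasDerivAt_exp_combination k (-k) _ _ x).deriv
  have hf'' : ∀ x, deriv (deriv f) x = k ^ 2 * f x := fun x => by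
    rw [hf', (hasDerivAt_exp_combination k (-k) _ _ x).deriv]; ring
  refine ⟨f, by fun_prop, ⟨0, ⟨le_rfl, ha⟩, ?_⟩, fun x _ => by rw [hf'']; ring, ?_, ?_⟩
  · simpa [f] using hk
  · simp only [hf', f, mul_zero, exp_zero]; ring
  · have hexp : exp (2 * k * a) = exp (k * a) * exp (k * a) := by rw [← exp_add]; ring_nf
    have hinv : exp (k * a) * exp (-k * a) = 1 := by rw [← exp_add]; simp
    rw [robinSecular, hexp] at hroot
    simp only [hf', f]
    linear_combination exp (-k * a) * hroot - (k - β) * (k - γ) * exp (k * a) * hinv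

theorem robinSecular_eq_zero_of_neg_sq_mem {a β γ k : ℝ} (ha : 0 ≤ a) (hk : k ≠ 0)
    (hE : -k ^ 2 ∈ robinEigenvalues a β γ) : robinSecular a β γ k = 0 := by
  obtain ⟨f, hf, ⟨x₀, hx₀, hfx₀⟩, hode, hβ, hγ⟩ := hE
  have hf' : ∀ x, HasDerivAt f (deriv f x) x :=
    fun x => (hf.differentiable (by norm_num) x).hasDerivAt
  have hf'' : ∀ x ∈ Icc 0 a, HasDerivAt (deriv f) (k ^ 2 * f x) x := fun x hx => by
    have hdiff : Differentiable ℝ (deriv f) := (hf.deriv' (n := 1)).differentiable one_ne_zero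
    exact (hdiff x).hasDerivAt.congr_deriv (by linarith [hode x hx])
  -- `f'' - k² f = (d/dx ∓ k)(f' ± k f)`, so `f' ± k f` are pure exponentials.
  have hu := eq_mul_exp_of_hasDerivAt (y := fun x => deriv f x + k * f x) (c := k)
    fun x hx => ((hf'' x hx).add ((hf' x).const_mul k)).congr_deriv (by ring)
  have hv := eq_mul_exp_of_hasDerivAt (y := fun x => deriv f x - k * f x) (c := -k)
    fun x hx => ((hf'' x hx).sub ((hf' x).const_mul k)).congr_deriv (by ring)
  have hf0 : f 0 ≠ 0 := by
    intro h0
    have hu₀ := hu x₀ hx₀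
    have hv₀ := hv x₀ hx₀
    have hd0 : deriv f 0 = 0 := by simpa [h0] using hβ
    rw [h0, hd0] at hu₀ hv₀
    have h2k : 2 * k * f x₀ = 0 := by linear_combination hu₀ - hv₀
    exact hfx₀ ((mul_eq_zero.mp h2k).resolve_left (mul_ne_zero two_ne_zero hk))
  have hua := hu a ⟨ha, le_rfl⟩
  have hva := hv a ⟨ha, le_rfl⟩
  have hexp : exp (2 * k * a) = exp (k * a) * exp (k * a) := by rw [← exp_add]; ring_nf
  have hinv : exp (k * a) * exp (-k * a) = 1 := by rw [← exp_add]; simp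
  apply mul_left_cancel₀ hf0
  rw [robinSecular, hexp]
  linear_combination -(k - γ) * exp (k * a) * (hua - hγ + exp (k * a) * hβ)
    + (k + γ) * exp (k * a) * (hγ - hva - exp (-k * a) * hβ) + (k + β) * (k + γ) * f 0 * hinv

theorem robinSecular_pos {a β γ k : ℝ} (hβ : 0 < β) (hβγ : 2 * γ < β) (hβa : 1 ≤ β * a)
    (hk : β ^ 2 + 123 * β ^ 2 * exp (-2 * β * a) ≤ k ^ 2) (hk0 : 0 ≤ k) :
    0 < robinSecular a β γ k := by
  have hβk : β < k := by
    nlinarith [mul_pos (by positivity : (0:ℝ) < 123 * β ^ 2) (exp_pos (-2 * β * a))]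
  have hgap : 123 * β ^ 2 ≤ (k ^ 2 - β ^ 2) * exp (2 * β * a) :=
    calc 123 * β ^ 2 = 123 * β ^ 2 * exp (-2 * β * a) * exp (2 * β * a) := by
          rw [mul_assoc, ← exp_add]; ring_nf; rw [exp_zero, mul_one]
      _ ≤ (k ^ 2 - β ^ 2) * exp (2 * β * a) := by gcongr; linarith
  have hgrowth : k ^ 2 ≤ β ^ 2 * exp (2 * (k - β) * a) := by
    have h := pow_le_pow_left₀ (by linarith) (le_mul_exp_sub_mul hβ hβk.le hβa) 2
    rwa [mul_pow, ← exp_nat_mul, Nat.cast_ofNat, ← mul_assoc] at h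
  have hexp : 123 * k ^ 2 ≤ (k ^ 2 - β ^ 2) * exp (2 * k * a) :=
    calc 123 * k ^ 2 ≤ 123 * β ^ 2 * exp (2 * (k - β) * a) := by linarith
      _ ≤ (k ^ 2 - β ^ 2) * exp (2 * β * a) * exp (2 * (k - β) * a) := by gcongr
      _ = (k ^ 2 - β ^ 2) * exp (2 * k * a) := by rw [mul_assoc, ← exp_add]; ring_nf
  have hk_pos : 0 < k := hβ.trans hβk
  -- `(k + β)² (k + γ) < 6 k³` and `123 k² (k - γ) > 61 k³`, since `γ < β / 2 < k / 2`.
  have hcubic : (k + β) * ((k + β) * (k + γ)) < 123 * k ^ 2 * (k - γ) := by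
    nlinarith [mul_pos (sub_pos.2 hβγ) (by positivity : (0:ℝ) < 123 * k ^ 2 + (k + β) ^ 2),
      mul_pos (mul_pos (sub_pos.2 hβk) hβ) hβ, mul_pos (mul_pos (sub_pos.2 hβk) hβ) hk_pos,
      mul_pos (mul_pos (sub_pos.2 hβk) hk_pos) hk_pos, pow_pos hβ 3]
  have hkβ : 0 < k + β := by linarith
  rw [robinSecular, sub_pos]
  refine lt_of_mul_lt_mul_left ?_ hkβ.le
  calc (k + β) * ((k + β) * (k + γ)) < 123 * k ^ 2 * (k - γ) := hcubic
    _ ≤ (k ^ 2 - β ^ 2) * exp (2 * k * a) * (k - γ) := by gcongr; linarith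
    _ = (k + β) * ((k - β) * (k - γ) * exp (2 * k * a)) := by ring

theorem exists_robinSecular_eq_zero {a β γ K : ℝ} (hβ : 0 < β) (hγ : 0 < γ) (hβK : β ≤ K)
    (hK : 0 < robinSecular a β γ K) : ∃ k ∈ Ioo β K, robinSecular a β γ k = 0 := by
  have hβ_neg : robinSecular a β γ β < 0 := by
    rw [robinSecular, sub_self, zero_mul, zero_mul, zero_sub, neg_neg_iff_pos]
    positivity
  exact intermediate_value_Ioo hβK (by unfold robinSecular; fun_prop) ⟨hβ_neg, hK⟩

theorem stmt2 (a β γ E : ℝ) (ha : 0 < a) (hγ : 0 < γ) (hβγ : β > 2 * γ)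
    (hβa : β * a > 1)
    (hE : IsLeast {E : ℝ | ∃ f : ℝ → ℝ, ContDiff ℝ 2 f ∧ (∃ x ∈ Icc 0 a, f x ≠ 0) ∧
      (∀ x ∈ Icc 0 a, -(deriv (deriv f) x) = E * f x) ∧
      deriv f 0 + β * f 0 = 0 ∧ deriv f a - γ * f a = 0} E) :
    β ^ 2 < -E ∧ -E < β ^ 2 + 123 * β ^ 2 * Real.exp (-2 * β * a) := by
  change IsLeast (robinEigenvalues a β γ) E at hE
  have hβ : 0 < β := by linarith
  constructor
  · set K := √(β ^ 2 + 123 * β ^ 2 * exp (-2 * β * a))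
    have hK : β ^ 2 + 123 * β ^ 2 * exp (-2 * β * a) ≤ K ^ 2 := (sq_sqrt (by positivity)).ge
    have hβK : β ≤ K := (le_sqrt' hβ).mpr (le_add_of_nonneg_right (by positivity))
    obtain ⟨k, ⟨hβk, -⟩, hroot⟩ := exists_robinSecular_eq_zero hβ hγ hβK
      (robinSecular_pos hβ hβγ hβa.le hK (sqrt_nonneg _))
    have hEk : E ≤ -k ^ 2 := hE.2 (neg_sq_mem_robinEigenvalues ha.le (hβ.trans hβk).ne' hroot)
    nlinarith
  · by_contra! hle
    have hE_neg : 0 < -E := lt_of_lt_of_le (by positivity) hle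
    obtain ⟨k, hk_pos, hk⟩ : ∃ k, 0 < k ∧ k ^ 2 = -E :=
      ⟨√(-E), sqrt_pos.mpr hE_neg, sq_sqrt hE_neg.le⟩
    refine (robinSecular_pos hβ hβγ hβa.le (hk ▸ hle) hk_pos.le).ne' ?_
    exact robinSecular_eq_zero_of_neg_sq_mem ha.le hk_pos.ne' (by rw [hk, neg_neg]; exact hE.1)
end

section
/- Let a, β > 0 with βa > 4/3. If k ∈ (0, β) satisfies log(β+k) − log(β−k) = 2ka and k > √(β² − β/a), then writing k = β − s with s ∈ (0, β/2), one has s < 2βe^{−βa}, and hence k² > β²(1 − 4e^{−βa}). -/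
/-!
Put `s = β - k`. Exponentiating the characteristic equation gives `s = (β + k) e^{-2ka}`.
The hypothesis `βa > 4/3` is exactly what makes `√(β² - β/a) ≥ β/2`, so `2k > β`; with
`β + k < 2β` this yields `s < 2β e^{-βa}`, and `k² = β² - 2βs + s² ≥ β² - 2βs` gives the bound
on `k²`.
-/

open Real Set

lemma eq_mul_exp_neg_of_log_sub_log_eq {x y c : ℝ} (hx : 0 < x) (hy : 0 < y)
    (h : log x - log y = c) : y = x * exp (-c) := by
  rw [← exp_log hx, ← exp_add, ← exp_log hy]
  congr 1
  linarith

lemma half_le_sqrt_sq_sub_div {a β : ℝ} (ha : 0 < a) (hβ : 0 ≤ β) (hβa : 4 / 3 ≤ β * a) :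
    β / 2 ≤ √(β ^ 2 - β / a) := by
  have hdiv : β / a ≤ 3 * β ^ 2 / 4 := by
    rw [div_le_iff₀ ha]
    nlinarith
  exact le_sqrt_of_sq_le (by linarith)

lemma add_mul_exp_neg_lt_two_mul_exp_neg {a β k : ℝ} (ha : 0 < a) (hk : k < β)
    (hhalf : β / 2 < k) : (β + k) * exp (-(2 * k * a)) < 2 * β * exp (-β * a) := by
  have hexp : exp (-(2 * k * a)) < exp (-β * a) := exp_lt_exp.mpr (by nlinarith)
  have hpos : 0 < exp (-(2 * k * a)) := exp_pos _
  nlinarith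

lemma mul_one_sub_four_mul_lt_sq {β k E : ℝ} (hβ : 0 < β) (h : β - k < 2 * β * E) :
    β ^ 2 * (1 - 4 * E) < k ^ 2 := by
  nlinarith [sq_nonneg (β - k)]

theorem stmt5_general (a β k : ℝ) (ha : 0 < a) (hβa : β * a > 4 / 3)
    (hk : k ∈ Ioo 0 β)
    (heq : Real.log (β + k) - Real.log (β - k) = 2 * k * a)
    (hk0 : k > Real.sqrt (β ^ 2 - β / a)) :
    0 < β - k ∧ β - k < β / 2 ∧ β - k < 2 * β * Real.exp (-β * a) ∧
    k ^ 2 > β ^ 2 * (1 - 4 * Real.exp (-β * a)) := by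
  obtain ⟨hk_pos, hk_lt⟩ := hk
  have hβ : 0 < β := hk_pos.trans hk_lt
  have hhalf : β / 2 < k := (half_le_sqrt_sq_sub_div ha hβ.le hβa.le).trans_lt hk0
  have hs : β - k = (β + k) * exp (-(2 * k * a)) :=
    eq_mul_exp_neg_of_log_sub_log_eq (by linarith) (by linarith) heq
  have hbound : β - k < 2 * β * exp (-β * a) :=
    hs ▸ add_mul_exp_neg_lt_two_mul_exp_neg ha hk_lt hhalf
  exact ⟨by linarith, by linarith, hbound, mul_one_sub_four_mul_lt_sq hβ hbound⟩

theorem stmt5 (a β k : ℝ) (ha : 0 < a) (hβ : 0 < β) (hβa : β * a > 4 / 3)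
    (hk : k ∈ Ioo 0 β)
    (heq : Real.log (β + k) - Real.log (β - k) = 2 * k * a)
    (hk0 : k > Real.sqrt (β ^ 2 - β / a)) :
    0 < β - k ∧ β - k < β / 2 ∧ β - k < 2 * β * Real.exp (-β * a) ∧
    k ^ 2 > β ^ 2 * (1 - 4 * Real.exp (-β * a)) :=
  stmt5_general a β k ha hβa hk heq hk0
end

section
/- For a, β > 0 with βa > 4/3, the lowest eigenvalue E(a,β) of the self-adjoint operator on L²(0,a) acting as f ↦ −f'' with boundary conditions f'(0)+βf(0)=0 and f(a)=0 satisfies β² − 4β²e^{−βa} < −E(a,β) < β². -/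
open Real Set

/-!
An eigenfunction for `-E = κ² ≥ β²` cannot exist: along a solution of `f'' = κ² f` the energy
`f'² - κ² f²` is constant; the Robin condition makes it `(β² - κ²) f(0)² ≤ 0` at `0`, while it is
`f'(a)² ≥ 0` at `a`, so `f(a) = f'(a) = 0`, and `f ≡ 0` because `(f' ± κ f) e^{∓κx}` are constant.

Conversely `sinh (κ (a - x))` is an eigenfunction for `-κ²` as soon as `κ = β tanh (κ a)`. Since
`βa > 4/3 > log 3`, such a root exists with `κ > β/2`, and with `q = e^{-2κa} < e^{-βa}` one has
`κ² = β² ((1 - q) / (1 + q))² > β² (1 - 4q) > β² - 4 β² e^{-βa}`.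
-/

def IsRobinDirichletEigenvalue (a β E : ℝ) : Prop :=
  ∃ f : ℝ → ℝ, ContDiff ℝ 2 f ∧ (∃ x ∈ Icc 0 a, f x ≠ 0) ∧
    (∀ x ∈ Icc 0 a, -(deriv (deriv f) x) = E * f x) ∧ deriv f 0 + β * f 0 = 0 ∧ f a = 0

lemma eqOn_Icc_of_hasDerivAt_zero {g : ℝ → ℝ} {c d : ℝ}
    (h : ∀ x ∈ Icc c d, HasDerivAt g 0 x) : ∀ x ∈ Icc c d, g x = g c :=
  constant_of_has_deriv_right_zero (fun x hx => (h x hx).continuousAt.continuousWithinAt)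
    fun x hx => (h x (Ico_subset_Icc_self hx)).hasDerivWithinAt

section SecondOrderODE

variable {f : ℝ → ℝ} {c d κ : ℝ}

lemma sq_deriv_sub_mul_sq_eq (hf : Differentiable ℝ f) (hf' : Differentiable ℝ (deriv f))
    (hode : ∀ x ∈ Icc c d, deriv (deriv f) x = κ ^ 2 * f x) :
    ∀ x ∈ Icc c d, deriv f x ^ 2 - κ ^ 2 * f x ^ 2 = deriv f c ^ 2 - κ ^ 2 * f c ^ 2 := by
  apply eqOn_Icc_of_hasDerivAt_zero
  intro x hx
  refine (((hf' x).hasDerivAt.pow 2).sub (((hf x).hasDerivAt.pow 2).const_mul (κ ^ 2))).congr_deriv ?_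
  rw [hode x hx]
  ring

lemma deriv_add_mul_mul_exp_eq (hf : Differentiable ℝ f) (hf' : Differentiable ℝ (deriv f))
    (hode : ∀ x ∈ Icc c d, deriv (deriv f) x = κ ^ 2 * f x) {μ : ℝ} (hμ : μ ^ 2 = κ ^ 2) :
    ∀ x ∈ Icc c d, (deriv f x + μ * f x) * exp (-μ * x) =
      (deriv f c + μ * f c) * exp (-μ * c) := by
  apply eqOn_Icc_of_hasDerivAt_zero
  intro x hx
  refine (((hf' x).hasDerivAt.add ((hf x).hasDerivAt.const_mul μ)).mul
    ((hasDerivAt_id x).const_mul (-μ)).exp).congr_deriv ?_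
  rw [hode x hx, ← hμ]
  simp only [Pi.add_apply, id]
  ring

lemma eqOn_zero_of_eq_zero_of_deriv_eq_zero (hf : Differentiable ℝ f)
    (hf' : Differentiable ℝ (deriv f)) (hode : ∀ x ∈ Icc c d, deriv (deriv f) x = κ ^ 2 * f x)
    (hκ : κ ≠ 0) (hfd : f d = 0) (hf'd : deriv f d = 0) : ∀ x ∈ Icc c d, f x = 0 := by
  intro x hx
  have hd : d ∈ Icc c d := ⟨hx.1.trans hx.2, le_rfl⟩
  have hvanish : ∀ μ : ℝ, μ ^ 2 = κ ^ 2 → deriv f x + μ * f x = 0 := fun μ hμ => by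
    have h := deriv_add_mul_mul_exp_eq hf hf' hode hμ
    simpa [hfd, hf'd, exp_ne_zero] using (h x hx).trans (h d hd).symm
  have hplus := hvanish κ rfl
  have hminus := hvanish (-κ) (neg_sq κ)
  have : 2 * κ * f x = 0 := by linear_combination hplus - hminus
  simpa [hκ] using this

lemma eqOn_zero_of_robin_of_dirichlet {β : ℝ} (hf : Differentiable ℝ f)
    (hf' : Differentiable ℝ (deriv f)) (hode : ∀ x ∈ Icc c d, deriv (deriv f) x = κ ^ 2 * f x)
    (hκ : κ ≠ 0) (hβκ : β ^ 2 ≤ κ ^ 2) (hfc : deriv f c + β * f c = 0) (hfd : f d = 0) :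
    ∀ x ∈ Icc c d, f x = 0 := by
  intro x hx
  have hd : d ∈ Icc c d := ⟨hx.1.trans hx.2, le_rfl⟩
  have henergy := sq_deriv_sub_mul_sq_eq hf hf' hode d hd
  rw [hfd, show deriv f c = -(β * f c) by linarith] at henergy
  have hf'd : deriv f d = 0 := by
    nlinarith [sq_nonneg (deriv f d), mul_nonneg (sub_nonneg.2 hβκ) (sq_nonneg (f c))]
  exact eqOn_zero_of_eq_zero_of_deriv_eq_zero hf hf' hode hκ hfd hf'd x hx

end SecondOrderODE

lemma IsRobinDirichletEigenvalue.neg_lt_sq {a β E : ℝ} (hβ : β ≠ 0)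
    (h : IsRobinDirichletEigenvalue a β E) : -E < β ^ 2 := by
  obtain ⟨f, hf, ⟨x, hx, hfx⟩, hode, hf0, hfa⟩ := h
  by_contra! hE
  have hκ : √(-E) ^ 2 = -E := sq_sqrt (by nlinarith [sq_pos_of_ne_zero hβ])
  refine hfx (eqOn_zero_of_robin_of_dirichlet (hf.differentiable (by norm_num))
    ((hf.iterate_deriv' 1 1).differentiable one_ne_zero) (fun y hy => ?_) ?_ (hκ ▸ hE) hf0 hfa x hx)
  · rw [hκ]; linarith [hode y hy]
  · rw [← sq_pos_iff, hκ]; nlinarith [sq_pos_of_ne_zero hβ]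

lemma isRobinDirichletEigenvalue_neg_sq {a β κ : ℝ} (ha : 0 < a) (hκ : κ ≠ 0)
    (hroot : κ * cosh (κ * a) = β * sinh (κ * a)) :
    IsRobinDirichletEigenvalue a β (-κ ^ 2) := by
  have hinner : ∀ x, HasDerivAt (fun x => κ * (a - x)) (-κ) x := fun x => by
    simpa using ((hasDerivAt_id x).const_sub a).const_mul κ
  have hderiv : deriv (fun x => sinh (κ * (a - x))) = fun x => -κ * cosh (κ * (a - x)) :=
    funext fun x => (hinner x).sinh.deriv.trans (mul_comm _ _)
  refine ⟨fun x => sinh (κ * (a - x)), by fun_prop, ⟨0, ⟨le_rfl, ha.le⟩, ?_⟩,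
    fun x _ => ?_, ?_, by simp⟩
  · simpa [sinh_eq_zero] using mul_ne_zero hκ ha.ne'
  · rw [hderiv, ((hinner x).cosh.const_mul (-κ)).deriv]
    ring
  · simp only [hderiv, sub_zero]
    linarith

lemma three_lt_exp_of_four_thirds_lt {x : ℝ} (hx : 4 / 3 < x) : 3 < exp x :=
  calc (3 : ℝ) < exp 1 * (1 / 3 + 1) := by linarith [exp_one_gt_d9]
    _ ≤ exp 1 * exp (1 / 3) := by gcongr; exact add_one_le_exp _
    _ = exp (4 / 3) := by rw [← exp_add]; norm_num
    _ < exp x := exp_lt_exp.2 hx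

lemma exists_mul_cosh_eq_mul_sinh {a β : ℝ} (hβ : 0 < β) (h3 : 3 < exp (β * a)) :
    ∃ κ, β / 2 < κ ∧ κ * cosh (κ * a) = β * sinh (κ * a) := by
  set g : ℝ → ℝ := fun κ => β * sinh (κ * a) - κ * cosh (κ * a) with hg
  have hgβ : g β < 0 := by
    have : g β = -β * exp (-(β * a)) := by rw [hg, ← cosh_sub_sinh]; ring
    rw [this]
    exact mul_neg_of_neg_of_pos (by linarith) (exp_pos _)
  have hghalf : 0 < g (β / 2) := by
    have hsq : exp (β / 2 * a) * exp (β / 2 * a) = exp (β * a) := by rw [← exp_add]; ring_nf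
    have hinv : exp (β / 2 * a) * exp (-(β / 2 * a)) = 1 := by rw [← exp_add]; simp
    have : g (β / 2) = β / 4 * (exp (β / 2 * a) - 3 * exp (-(β / 2 * a))) := by
      simp only [hg, sinh_eq, cosh_eq]; ring
    rw [this]
    exact mul_pos (by positivity) (by nlinarith [exp_pos (β / 2 * a)])
  obtain ⟨κ, hκ, hgκ⟩ := intermediate_value_Ioo' (by linarith : β / 2 ≤ β)
    (by fun_prop : ContinuousOn g (Icc (β / 2) β)) ⟨hgβ, hghalf⟩
  exact ⟨κ, hκ.1, by linarith [hgκ]⟩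

lemma sq_sub_four_mul_sq_mul_exp_lt_sq {a β κ : ℝ} (hβ : β ≠ 0) (ha : 0 < a) (hκ : β / 2 < κ)
    (hroot : κ * cosh (κ * a) = β * sinh (κ * a)) :
    β ^ 2 - 4 * β ^ 2 * exp (-β * a) < κ ^ 2 := by
  set q := exp (-(κ * a)) * exp (-(κ * a))
  have hq : κ * (1 + q) = β * (1 - q) := by
    have hinv : exp (κ * a) * exp (-(κ * a)) = 1 := by rw [← exp_add]; simp
    rw [sinh_eq, cosh_eq] at hroot
    linear_combination (2 * exp (-(κ * a))) * hroot + (β - κ) * hinv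
  have hq0 : 0 < q := by positivity
  have hqlt : q < exp (-β * a) :=
    calc q = exp (-(κ * a) + -(κ * a)) := (exp_add _ _).symm
      _ < exp (-β * a) := exp_lt_exp.2 (by nlinarith)
  -- `(1 - q)² - (1 - 4q)(1 + q)² = 8q² + 4q³`
  have hkey : (β ^ 2 - 4 * β ^ 2 * q) * (1 + q) ^ 2 < κ ^ 2 * (1 + q) ^ 2 := by
    have hpos : 0 < β ^ 2 * q ^ 2 * (8 + 4 * q) := by positivity
    linear_combination hpos - (κ * (1 + q) + β * (1 - q)) * hq
  nlinarith [lt_of_mul_lt_mul_right hkey (sq_nonneg _), sq_pos_of_ne_zero hβ]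

theorem stmt6 (a β E : ℝ) (ha : 0 < a) (hβ : 0 < β) (hβa : β * a > 4 / 3)
    (hE : IsLeast {E : ℝ | ∃ f : ℝ → ℝ, ContDiff ℝ 2 f ∧ (∃ x ∈ Icc 0 a, f x ≠ 0) ∧
      (∀ x ∈ Icc 0 a, -(deriv (deriv f) x) = E * f x) ∧
      deriv f 0 + β * f 0 = 0 ∧ f a = 0} E) :
    β ^ 2 - 4 * β ^ 2 * Real.exp (-β * a) < -E ∧ -E < β ^ 2 := by
  obtain ⟨κ, hκ, hroot⟩ := exists_mul_cosh_eq_mul_sinh hβ (three_lt_exp_of_four_thirds_lt hβa)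
  have hEκ : E ≤ -κ ^ 2 := hE.2 (isRobinDirichletEigenvalue_neg_sq ha (by linarith) hroot)
  have hκE := sq_sub_four_mul_sq_mul_exp_lt_sq hβ.ne' ha hκ hroot
  exact ⟨by linarith, IsRobinDirichletEigenvalue.neg_lt_sq hβ.ne' hE.1⟩
end
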